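/- arXiv:1908.03599 — 2 statements merged into one kernel-verified Lean document; each statement's English description precedes it below -/
import Mathlib

section
/- For λ = (λ_1,…,λ_n) ∈ ℝ^n, define σ_k(λ) = Σ_{1≤i_1<⋯<i_k≤n} λ_{i_1}⋯λ_{i_k} and Γ_k = {λ ∈ ℝ^n : σ_j(λ) > 0 for all j = 1,…,k}. Then Γ_k is an open convex cone in ℝ^n, i.e., it is open, closed under positive scalar multiplication, and closed under addition. -/
open Finset

/-- The k-th elementary symmetric polynomial of `lam : Fin n → ℝ`. -/
noncomputable def esymm (n k : ℕ) (lam : Fin n → ℝ) : ℝ :=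
  ∑ s ∈ (Finset.univ : Finset (Fin n)).powersetCard k, ∏ i ∈ s, lam i

/-- σ_k(λ|p): the k-th elementary symmetric polynomial of λ with the p-th entry deleted. -/
noncomputable def esymmDel (n k : ℕ) (lam : Fin n → ℝ) (p : Fin n) : ℝ :=
  ∑ s ∈ ((Finset.univ : Finset (Fin n)).erase p).powersetCard k, ∏ i ∈ s, lam i

/-- σ_k(λ|pq): the k-th elementary symmetric polynomial of λ with the p-th and q-th entries deleted. -/
noncomputable def esymmDel2 (n k : ℕ) (lam : Fin n → ℝ) (p q : Fin n) : ℝ :=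
  ∑ s ∈ (((Finset.univ : Finset (Fin n)).erase p).erase q).powersetCard k, ∏ i ∈ s, lam i

/-- The Gårding cone Γ_k ⊂ ℝ^n. -/
def GammaK (n k : ℕ) : Set (Fin n → ℝ) :=
  {lam | ∀ j, 1 ≤ j → j ≤ k → 0 < esymm n j lam}

/-
================================================================================
  Auxiliary theory: a real-analytic proof of Gårding's theorem for the
  elementary symmetric polynomials.

  The strategy:
  * σ_j(v + z·e) is the evaluation of a Hasse derivative of ∏(X + v_i)
    (a Taylor-coefficient identity);
  * over ℝ the iterated derivative of the split polynomial ∏(X + v_i)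
    splits (Rolle), hence σ_j(y + z·e) ≠ 0 for non-real z (lemma `EB`);
  * a clopen/homotopy propagation lemma (`chain`) transports half-plane
    nonvanishing of a continuous family of polynomials, using an elementary
    quantitative lower bound on |p(z)| in terms of root locations (`LB`)
    and a Cauchy bound (`CB`);
  * this gives nonvanishing of σ_j(x + i e + z b) on the closed upper half
    plane for "nonnegative" directions b (`dirIm`), hence hyperbolicity of
    σ_j in such directions (`dirReal`);
  * a second homotopy in the base point gives σ_j(λ + z μ) ≠ 0 for
    Re z ≥ 0 (`segRe`), whence σ_j(λ + μ) > 0 (`addPos`).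
================================================================================
-/

namespace Gard

open Polynomial

variable {R : Type*} [CommRing R]

/-- generic elementary symmetric function -/
noncomputable def Ssym (n j : ℕ) (v : Fin n → R) : R :=
  ∑ s ∈ (Finset.univ : Finset (Fin n)).powersetCard j, ∏ i ∈ s, v i

lemma Ssym_zero (n : ℕ) (v : Fin n → R) : Ssym n 0 v = 1 := by
  simp [Ssym]

lemma Ssym_congr (n j : ℕ) {v w : Fin n → R}
    (h : ∀ i, v i = w i) : Ssym n j v = Ssym n j w :=
  congrArg (Ssym n j) (funext h)

lemma Ssym_smul (n j : ℕ) (v : Fin n → R) (c : R) :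
    Ssym n j (fun i => c * v i) = c ^ j * Ssym n j v := by
  rw [Ssym, Ssym, Finset.mul_sum]
  refine Finset.sum_congr rfl (fun s hs => ?_)
  rw [Finset.mem_powersetCard] at hs
  rw [Finset.prod_mul_distrib, Finset.prod_const, hs.2]

/-- the generating polynomial ∏ (X + v i) -/
noncomputable def Pgen (n : ℕ) (v : Fin n → R) : R[X] :=
  ∏ i : Fin n, (X + C (v i))

lemma Pgen_coeff (n j : ℕ) (v : Fin n → R) (hj : j ≤ n) :
    (Pgen n v).coeff (n - j) = Ssym n j v := by
  have h : n - j ≤ #(univ : Finset (Fin n)) := by simp [Nat.sub_le]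
  rw [Pgen, Finset.prod_X_add_C_coeff _ _ h]
  simp only [card_univ, Fintype.card_fin]
  rw [Nat.sub_sub_self hj]
  rfl

lemma Pgen_natDegree (n : ℕ) (v : Fin n → R) [Nontrivial R] : (Pgen n v).natDegree = n := by
  rw [Pgen, natDegree_prod_of_monic _ _ (fun i _ => monic_X_add_C (v i))]
  simp [natDegree_X_add_C]

/-- shift along the diagonal = evaluation of the Hasse derivative -/
lemma Ssym_shift (n j : ℕ) (v : Fin n → R) (z : R) (hj : j ≤ n) :
    Ssym n j (fun i => v i + z) = (hasseDeriv (n - j) (Pgen n v)).eval z := by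
  rw [← taylor_coeff, ← Pgen_coeff n j _ hj]
  congr 1
  show Pgen n (fun i => v i + z) = taylor z (Pgen n v)
  rw [Pgen, Pgen]
  have : taylor z (∏ i : Fin n, (X + C (v i)))
      = ∏ i : Fin n, taylor z (X + C (v i)) :=
    map_prod (taylorAlgHom z) _ _
  rw [this]
  refine Finset.prod_congr rfl (fun i _ => ?_)
  rw [taylor_apply, add_comp, X_comp, C_comp, C_add]
  ring

section CharZ
variable [CharZero R] [NoZeroDivisors R] [Nontrivial R]

lemma hasseDeriv_Pgen_coeff (n j i : ℕ) (v : Fin n → R) (hj : j ≤ n) (hij : i ≤ j) :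
    (hasseDeriv (n - j) (Pgen n v)).coeff i
      = ((n - (j - i)).choose (n - j) : R) * Ssym n (j - i) v := by
  rw [hasseDeriv_coeff]
  have h1 : i + (n - j) = n - (j - i) := by omega
  rw [h1, Pgen_coeff n (j - i) v (by omega)]

lemma hasseDeriv_Pgen_natDegree (n j : ℕ) (v : Fin n → R) (hj : j ≤ n) :
    (hasseDeriv (n - j) (Pgen n v)).natDegree = j := by
  rw [natDegree_hasseDeriv, Pgen_natDegree]
  omega

lemma hasseDeriv_Pgen_coeff_top (n j : ℕ) (v : Fin n → R) (hj : j ≤ n) :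
    (hasseDeriv (n - j) (Pgen n v)).coeff j = (n.choose (n - j) : R) := by
  rw [hasseDeriv_Pgen_coeff n j j v hj le_rfl]
  simp [Ssym]

lemma hasseDeriv_Pgen_ne_zero (n j : ℕ) (v : Fin n → R) (hj : j ≤ n) :
    hasseDeriv (n - j) (Pgen n v) ≠ 0 := by
  intro h
  have := hasseDeriv_Pgen_coeff_top n j v hj
  rw [h, coeff_zero] at this
  have hne : (n.choose (n - j) : R) ≠ 0 := by
    exact_mod_cast Nat.cast_ne_zero.mpr (Nat.choose_pos (Nat.sub_le n j)).ne'
  exact hne this.symm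

end CharZ

/-- positivity of σ_j(w + c·e) when the lower σ's are nonnegative -/
lemma Ssym_shift_pos (n j : ℕ) (w : Fin n → ℝ) (hj : j ≤ n)
    (hw : ∀ m, m ≤ j → 0 ≤ Ssym n m w) {c : ℝ} (hc : 0 < c) :
    0 < Ssym n j (fun i => w i + c) := by
  rw [Ssym_shift n j w c hj]
  set Q := hasseDeriv (n - j) (Pgen n w) with hQ
  have hdeg : Q.natDegree = j := hasseDeriv_Pgen_natDegree n j w hj
  rw [eval_eq_sum_range, hdeg]
  have hterm : ∀ i ∈ Finset.range (j + 1), 0 ≤ Q.coeff i * c ^ i := by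
    intro i hi
    rw [Finset.mem_range] at hi
    have hij : i ≤ j := by omega
    rw [hQ, hasseDeriv_Pgen_coeff n j i w hj hij]
    have h1 : (0:ℝ) ≤ ((n - (j - i)).choose (n - j) : ℝ) := by positivity
    have h2 : 0 ≤ Ssym n (j - i) w := hw _ (by omega)
    positivity
  refine Finset.sum_pos' hterm ⟨j, Finset.self_mem_range_succ j, ?_⟩
  rw [hQ, hasseDeriv_Pgen_coeff_top n j w hj]
  have h1 : (0:ℝ) < (n.choose (n - j) : ℝ) := by
    exact_mod_cast Nat.choose_pos (Nat.sub_le n j)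
  positivity

/-- derivative of a real split polynomial splits (Rolle) -/
lemma splits_derivative {p : ℝ[X]} (hp : p.Splits) :
    (derivative p).Splits := by
  by_cases hd : derivative p = 0
  · rw [hd]; exact Splits.zero
  by_cases hp0 : p = 0
  · rw [hp0, derivative_zero]; exact Splits.zero
  have hdeg : p.natDegree ≠ 0 := by
    intro h
    rw [eq_C_of_natDegree_eq_zero h, derivative_C] at hd
    exact hd rfl
  have h1 : Multiset.card p.roots = p.natDegree := (splits_iff_card_roots).mp hp
  have h2 : Multiset.card p.roots ≤ Multiset.card (derivative p).roots + 1 :=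
    p.card_roots_le_derivative
  have h3 : (derivative p).natDegree ≤ p.natDegree - 1 := natDegree_derivative_le p
  have h4 : Multiset.card (derivative p).roots ≤ (derivative p).natDegree :=
    card_roots' _
  rw [splits_iff_card_roots]
  omega

lemma splits_iterate_derivative {p : ℝ[X]} (hp : p.Splits) (m : ℕ) :
    (derivative^[m] p).Splits := by
  induction m with
  | zero => exact hp
  | succ m ih => rw [Function.iterate_succ_apply']; exact splits_derivative ih

lemma splits_hasseDeriv {p : ℝ[X]} (hp : p.Splits) (m : ℕ) :
    (hasseDeriv m p).Splits := by
  have key : ((m.factorial : ℕ) : ℝ) • hasseDeriv m p = derivative^[m] p := by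
    have := congrFun (factorial_smul_hasseDeriv (R := ℝ) (k := m)) p
    simpa [Nat.cast_smul_eq_nsmul] using this
  by_cases h0 : hasseDeriv m p = 0
  · rw [h0]; exact Splits.zero
  have hfac : ((m.factorial : ℕ) : ℝ) ≠ 0 := by exact_mod_cast Nat.factorial_ne_zero m
  have hsp := splits_iterate_derivative hp m
  rw [splits_iff_card_roots] at hsp ⊢
  have hroots : (hasseDeriv m p).roots = (derivative^[m] p).roots := by
    rw [← key, roots_smul_nonzero _ hfac]
  have hdeg : (hasseDeriv m p).natDegree = (derivative^[m] p).natDegree := by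
    rw [← key, smul_eq_C_mul, natDegree_C_mul hfac]
  rw [hroots, hdeg]
  exact hsp

lemma Ssym_ofReal (n j : ℕ) (v : Fin n → ℝ) :
    ((Ssym n j v : ℝ) : ℂ) = Ssym n j (fun i => (v i : ℂ)) := by
  simp [Ssym]

lemma Ssym_conj (n j : ℕ) (v : Fin n → ℂ) :
    (starRingEnd ℂ) (Ssym n j v) = Ssym n j (fun i => (starRingEnd ℂ) (v i)) := by
  simp [Ssym]

lemma Pgen_map (n : ℕ) (v : Fin n → ℝ) :
    (Pgen n v).map (algebraMap ℝ ℂ) = Pgen n (fun i => (v i : ℂ)) := by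
  rw [Pgen, Polynomial.map_prod]
  refine Finset.prod_congr rfl (fun i _ => ?_)
  simp [Polynomial.map_add]

lemma hasseDeriv_map {S T : Type*} [CommRing S] [CommRing T] (f : S →+* T) (m : ℕ) (p : S[X]) :
    (hasseDeriv m p).map f = hasseDeriv m (p.map f) := by
  ext i
  rw [coeff_map, hasseDeriv_coeff, hasseDeriv_coeff, coeff_map, map_mul, map_natCast]

/-- σ_j(y + z·e) ≠ 0 for real y and non-real z (hyperbolicity in direction e) -/
lemma EB (n j : ℕ) (hjn : j ≤ n) (y : Fin n → ℝ) {z : ℂ} (hz : z.im ≠ 0) :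
    Ssym n j (fun i => (y i : ℂ) + z) ≠ 0 := by
  rw [Ssym_shift n j _ z hjn]
  have hmap : hasseDeriv (n - j) (Pgen n (fun i => (y i : ℂ)))
      = (hasseDeriv (n - j) (Pgen n y)).map (algebraMap ℝ ℂ) := by
    rw [hasseDeriv_map, Pgen_map]
  rw [hmap]
  set Q := hasseDeriv (n - j) (Pgen n y) with hQdef
  have hQsplits : Q.Splits := by
    apply splits_hasseDeriv
    refine Splits.prod (fun i _ => ?_)
    have h : (X + C (y i) : ℝ[X]) = X - C (-(y i)) := by
      rw [map_neg, sub_neg_eq_add]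
    rw [h]
    exact Splits.X_sub_C _
  have hQ0 : Q ≠ 0 := hasseDeriv_Pgen_ne_zero n j y hjn
  have hfact := hQsplits.eq_prod_roots
  rw [hfact, Polynomial.map_mul, map_C, Polynomial.map_multiset_prod, eval_mul, eval_C]
  apply mul_ne_zero
  · simp only [Complex.coe_algebraMap, ne_eq, Complex.ofReal_eq_zero]
    exact leadingCoeff_ne_zero.mpr hQ0
  · rw [Multiset.map_map, eval_multiset_prod, Multiset.map_map]
    rw [Ne, Multiset.prod_eq_zero_iff]
    intro hmem
    rw [Multiset.mem_map] at hmem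
    obtain ⟨r, _, hr⟩ := hmem
    simp only [Function.comp_apply, Polynomial.map_sub, map_X, map_C, eval_sub, eval_X,
      eval_C] at hr
    rw [sub_eq_zero] at hr
    rw [hr] at hz
    simp at hz

/-- coefficients of z ↦ σ_j(v + z w) -/
noncomputable def cf (n j : ℕ) (v w : Fin n → ℂ) (m : ℕ) : ℂ :=
  ∑ s ∈ (Finset.univ : Finset (Fin n)).powersetCard j, ∑ t ∈ s.powersetCard m,
     (∏ i ∈ t, w i) * ∏ i ∈ s \ t, v i

lemma S_add_smul (n j : ℕ) (v w : Fin n → ℂ) (z : ℂ) :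
    Ssym n j (fun i => v i + z * w i) = ∑ m ∈ range (j + 1), cf n j v w m * z ^ m := by
  rw [Ssym]
  have hs : ∀ s ∈ (Finset.univ : Finset (Fin n)).powersetCard j,
      ∏ i ∈ s, (v i + z * w i) = ∑ m ∈ range (j+1),
        (∑ t ∈ s.powersetCard m, (∏ i ∈ t, w i) * ∏ i ∈ s \ t, v i) * z ^ m := by
    intro s hsmem
    rw [mem_powersetCard] at hsmem
    calc ∏ i ∈ s, (v i + z * w i) = ∏ i ∈ s, (z * w i + v i) :=
            Finset.prod_congr rfl fun i _ => add_comm _ _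
      _ = ∑ t ∈ s.powerset, (∏ i ∈ t, (z * w i)) * ∏ i ∈ s \ t, v i :=
            Finset.prod_add (fun i => z * w i) v s
      _ = ∑ m ∈ range (j+1), ∑ t ∈ s.powerset with t.card = m,
            (∏ i ∈ t, (z * w i)) * ∏ i ∈ s \ t, v i := by
            refine (Finset.sum_fiberwise_of_maps_to (fun t ht => ?_) _).symm
            rw [mem_range, Nat.lt_succ_iff, ← hsmem.2]
            exact card_le_card (mem_powerset.mp ht)
      _ = ∑ m ∈ range (j+1), ∑ t ∈ s.powersetCard m,
            (∏ i ∈ t, (z * w i)) * ∏ i ∈ s \ t, v i := by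
            refine Finset.sum_congr rfl fun m _ => ?_
            rw [powersetCard_eq_filter]
      _ = ∑ m ∈ range (j+1),
            (∑ t ∈ s.powersetCard m, (∏ i ∈ t, w i) * ∏ i ∈ s \ t, v i) * z ^ m := by
            refine Finset.sum_congr rfl fun m _ => ?_
            rw [Finset.sum_mul]
            refine Finset.sum_congr rfl fun t ht => ?_
            rw [mem_powersetCard] at ht
            rw [Finset.prod_mul_distrib, Finset.prod_const, ht.2]
            ring
  rw [Finset.sum_congr rfl hs, Finset.sum_comm]
  refine Finset.sum_congr rfl fun m _ => ?_
  rw [cf, Finset.sum_mul]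

lemma cf_top (n j : ℕ) (v w : Fin n → ℂ) : cf n j v w j = Ssym n j w := by
  rw [cf, Ssym]
  refine Finset.sum_congr rfl fun s hs => ?_
  rw [mem_powersetCard] at hs
  rw [← hs.2, powersetCard_self, Finset.sum_singleton, Finset.sdiff_self,
    Finset.prod_empty, mul_one]

lemma cf_continuous (n j m : ℕ) {v w : ℝ → Fin n → ℂ}
    (hv : ∀ i, Continuous fun u => v u i) (hw : ∀ i, Continuous fun u => w u i) :
    Continuous fun u => cf n j (v u) (w u) m := by
  unfold cf
  refine continuous_finset_sum _ fun s _ => continuous_finset_sum _ fun t _ => ?_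
  exact (continuous_finset_prod _ fun i _ => hw i).mul
    (continuous_finset_prod _ fun i _ => hv i)

lemma Ssym_continuousC (n j : ℕ) {v : ℝ → Fin n → ℂ}
    (hv : ∀ i, Continuous fun u => v u i) : Continuous fun u => Ssym n j (v u) := by
  unfold Ssym
  exact continuous_finset_sum _ fun s _ => continuous_finset_prod _ fun i _ => hv i

noncomputable def pol (j : ℕ) (a : ℕ → ℂ) : ℂ[X] := ∑ m ∈ range (j+1), C (a m) * X ^ m

lemma norm_multiset_prod' (s : Multiset ℂ) : ‖s.prod‖ = (s.map (fun z : ℂ => ‖z‖)).prod := by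
  induction s using Multiset.induction_on with
  | empty => simp
  | cons a s ih => simp [ih]

lemma pol_eval (j : ℕ) (a : ℕ → ℂ) (z : ℂ) :
    (pol j a).eval z = ∑ m ∈ range (j+1), a m * z ^ m := by
  rw [pol, eval_finset_sum]
  simp

lemma pol_coeff (j : ℕ) (a : ℕ → ℂ) {m : ℕ} (hm : m ≤ j) : (pol j a).coeff m = a m := by
  rw [pol, finset_sum_coeff]
  rw [Finset.sum_eq_single_of_mem m (by rw [mem_range]; omega)]
  · rw [coeff_C_mul, coeff_X_pow, if_pos rfl, mul_one]
  · intro i _ hne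
    rw [coeff_C_mul, coeff_X_pow, if_neg (Ne.symm hne), mul_zero]

lemma pol_coeff_gt (j : ℕ) (a : ℕ → ℂ) {m : ℕ} (hm : j < m) : (pol j a).coeff m = 0 := by
  rw [pol, finset_sum_coeff]
  refine Finset.sum_eq_zero fun i hi => ?_
  rw [mem_range] at hi
  rw [coeff_C_mul, coeff_X_pow, if_neg (by omega), mul_zero]

lemma pol_natDegree (j : ℕ) (a : ℕ → ℂ) (ha : a j ≠ 0) : (pol j a).natDegree = j := by
  refine le_antisymm ?_ ?_
  · exact natDegree_le_iff_coeff_eq_zero.mpr fun N hN => pol_coeff_gt j a hN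
  · refine le_natDegree_of_ne_zero ?_
    rw [pol_coeff j a le_rfl]
    exact ha

lemma pol_ne_zero (j : ℕ) (a : ℕ → ℂ) (ha : a j ≠ 0) : pol j a ≠ 0 := by
  intro h
  have := pol_coeff j a (le_refl j)
  rw [h, coeff_zero] at this
  exact ha this.symm

lemma pol_leadingCoeff (j : ℕ) (a : ℕ → ℂ) (ha : a j ≠ 0) : (pol j a).leadingCoeff = a j := by
  rw [leadingCoeff, pol_natDegree j a ha, pol_coeff j a le_rfl]

lemma mult_pow_le {s : Multiset ℝ} {c : ℝ} (hc : 0 ≤ c) (h : ∀ x ∈ s, c ≤ x) :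
    c ^ Multiset.card s ≤ s.prod := by
  induction s using Multiset.induction_on with
  | empty => simp
  | cons a s ih =>
    rw [Multiset.prod_cons, Multiset.card_cons, pow_succ']
    have ha := h a (Multiset.mem_cons_self a s)
    have h2 : c ^ Multiset.card s ≤ s.prod := ih fun x hx => h x (Multiset.mem_cons_of_mem hx)
    exact mul_le_mul ha h2 (pow_nonneg hc _) (hc.trans ha)

/-- lower bound for |p(z)| in terms of distances to the roots -/
lemma LB {p : ℂ[X]} (hp : p ≠ 0) {c : ℝ} (hc : 0 ≤ c) {z : ℂ}
    (h : ∀ r ∈ p.roots, c ≤ ‖z - r‖) :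
    ‖p.leadingCoeff‖ * c ^ p.natDegree ≤ ‖p.eval z‖ := by
  have hsp : p.Splits := IsAlgClosed.splits p
  have hcard : Multiset.card p.roots = p.natDegree := (splits_iff_card_roots).mp hsp
  have hfact := hsp.eq_prod_roots
  calc ‖p.leadingCoeff‖ * c ^ p.natDegree
      ≤ ‖p.leadingCoeff‖ * (p.roots.map fun r => ‖z - r‖).prod := by
        refine mul_le_mul_of_nonneg_left ?_ (norm_nonneg _)
        have := mult_pow_le (s := p.roots.map fun r => ‖z - r‖) hc (by
          intro x hx
          rw [Multiset.mem_map] at hx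
          obtain ⟨r, hr, rfl⟩ := hx
          exact h r hr)
        rwa [Multiset.card_map, hcard] at this
    _ = ‖p.eval z‖ := by
        conv_rhs => rw [hfact]
        rw [eval_mul, eval_C, norm_mul, eval_multiset_prod, Multiset.map_map,
          norm_multiset_prod', Multiset.map_map]
        congr 2
        refine Multiset.map_congr rfl fun r _ => ?_
        simp

/-- Cauchy-type bound -/
lemma CB {j : ℕ} (hj : 1 ≤ j) (a : ℕ → ℂ) {B ρ : ℝ} (hρ : 0 < ρ) (hlead : ρ ≤ ‖a j‖)
    (hB : ∀ m, m < j → ‖a m‖ ≤ B) {z : ℂ} (hz : ↑j * B / ρ + 1 ≤ ‖z‖) :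
    (∑ m ∈ range (j+1), a m * z ^ m) ≠ 0 := by
  have hB0 : 0 ≤ B := le_trans (norm_nonneg _) (hB 0 hj)
  have hz1 : (1:ℝ) ≤ ‖z‖ := by
    refine le_trans ?_ hz
    have : 0 ≤ ↑j * B / ρ := div_nonneg (mul_nonneg (Nat.cast_nonneg j) hB0) hρ.le
    linarith
  rw [Finset.sum_range_succ]
  intro h0
  have heq : a j * z ^ j = -(∑ m ∈ range j, a m * z ^ m) := by linear_combination h0
  have h1 : ‖a j * z ^ j‖ ≤ ∑ m ∈ range j, ‖a m * z ^ m‖ := by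
    rw [heq, norm_neg]; exact norm_sum_le _ _
  have h2 : ∑ m ∈ range j, ‖a m * z ^ m‖ ≤ ↑j * (B * ‖z‖ ^ (j-1)) := by
    calc ∑ m ∈ range j, ‖a m * z ^ m‖ ≤ ∑ _m ∈ range j, B * ‖z‖ ^ (j-1) := by
          refine Finset.sum_le_sum fun m hm => ?_
          rw [mem_range] at hm
          rw [norm_mul, norm_pow]
          refine mul_le_mul (hB m hm) (pow_le_pow_right₀ hz1 (by omega)) (by positivity) hB0
      _ = ↑j * (B * ‖z‖ ^ (j-1)) := by rw [Finset.sum_const, card_range, nsmul_eq_mul]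
  have h3 : (↑j * B + ρ) * ‖z‖ ^ (j-1) ≤ ‖a j * z ^ j‖ := by
    rw [norm_mul, norm_pow]
    have hzj : ‖z‖ ^ j = ‖z‖ * ‖z‖ ^ (j - 1) := by
      have hj' : j - 1 + 1 = j := by omega
      rw [← hj', pow_succ']
      rw [hj']
    rw [hzj]
    calc (↑j * B + ρ) * ‖z‖ ^ (j-1) = (↑j * B / ρ + 1) * ρ * ‖z‖ ^ (j-1) := by
          field_simp
      _ ≤ ‖z‖ * ρ * ‖z‖^(j-1) := by
          refine mul_le_mul_of_nonneg_right (mul_le_mul_of_nonneg_right hz hρ.le) (by positivity)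
      _ ≤ ‖a j‖ * (‖z‖ * ‖z‖ ^ (j-1)) := by
          rw [show ‖z‖ * ρ * ‖z‖^(j-1) = ρ * (‖z‖ * ‖z‖^(j-1)) by ring]
          exact mul_le_mul_of_nonneg_right hlead (by positivity)
  have hpos : 0 < ρ * ‖z‖ ^ (j-1) := by positivity
  nlinarith [h1, h2, h3]

set_option maxHeartbeats 1000000 in
/-- The homotopy/clopen propagation lemma: non-vanishing of a continuously varying
polynomial family on a closed half-plane propagates along the family, provided the
leading coefficient never vanishes and there are never zeros on the boundary line. -/
lemma chain {j : ℕ} (hj : 1 ≤ j) (a : ℝ → ℕ → ℂ)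
    (hcont : ∀ m, m ≤ j → Continuous fun u => a u m)
    (w₀ : ℂ) (hw₀ : ‖w₀‖ = 1)
    (hlead : ∀ u ∈ Set.Icc (0:ℝ) 1, a u j ≠ 0)
    (hbd : ∀ u ∈ Set.Icc (0:ℝ) 1, ∀ z : ℂ, (w₀ * z).re = 0 →
        ∑ m ∈ range (j+1), a u m * z ^ m ≠ 0)
    (h0 : ∀ z : ℂ, 0 ≤ (w₀ * z).re → ∑ m ∈ range (j+1), a 0 m * z ^ m ≠ 0) :
    ∀ z : ℂ, 0 ≤ (w₀ * z).re → ∑ m ∈ range (j+1), a 1 m * z ^ m ≠ 0 := by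
  classical
  set ψ : ℂ → ℝ := fun z => (w₀ * z).re with hψdef
  have hψle : ∀ z : ℂ, ψ z ≤ ‖z‖ := by
    intro z
    have h1 : (w₀ * z).re ≤ ‖w₀ * z‖ := Complex.re_le_norm _
    rwa [norm_mul, hw₀, one_mul] at h1
  have hψsub : ∀ z r : ℂ, ψ z - ψ r ≤ ‖z - r‖ := by
    intro z r
    have h1 := hψle (z - r)
    have h2 : ψ (z - r) = ψ z - ψ r := by
      simp only [hψdef, mul_sub, Complex.sub_re]
    linarith
  set E : ℝ → ℂ → ℂ := fun u z => ∑ m ∈ range (j+1), a u m * z ^ m with hEdef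
  have hEeval : ∀ u z, (pol j (a u)).eval z = E u z := fun u z => pol_eval j (a u) z
  set prop : ℝ → Prop := fun u => ∀ z : ℂ, 0 ≤ ψ z → E u z ≠ 0 with hpropdef
  obtain ⟨u₀, hu₀I, hu₀max⟩ := isCompact_Icc.exists_isMaxOn (Set.nonempty_Icc.mpr zero_le_one)
    (Continuous.continuousOn (continuous_finset_sum (range (j+1))
      (fun m hm => ((hcont m (by rw [mem_range] at hm; omega)).norm))) :
        ContinuousOn (fun u => ∑ m ∈ range (j+1), ‖a u m‖) (Set.Icc 0 1))
  set B : ℝ := ∑ m ∈ range (j+1), ‖a u₀ m‖ with hBdef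
  have hB : ∀ u ∈ Set.Icc (0:ℝ) 1, ∀ m, m ≤ j → ‖a u m‖ ≤ B := by
    intro u hu m hm
    have h1 : ‖a u m‖ ≤ ∑ m ∈ range (j+1), ‖a u m‖ :=
      Finset.single_le_sum (fun i _ => norm_nonneg _) (by rw [mem_range]; omega)
    exact h1.trans (hu₀max hu)
  obtain ⟨u₁', hu₁'I, hu₁'min⟩ := isCompact_Icc.exists_isMinOn (Set.nonempty_Icc.mpr zero_le_one)
    (Continuous.continuousOn ((hcont j le_rfl).norm) :
      ContinuousOn (fun u => ‖a u j‖) (Set.Icc 0 1))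
  set ρ : ℝ := ‖a u₁' j‖ with hρdef
  have hρpos : 0 < ρ := norm_pos_iff.mpr (hlead u₁' hu₁'I)
  have hρle : ∀ u ∈ Set.Icc (0:ℝ) 1, ρ ≤ ‖a u j‖ := fun u hu => hu₁'min hu
  set M : ℝ := ↑j * B / ρ + 1 with hMdef
  have hB0 : 0 ≤ B := le_trans (norm_nonneg _) (hB 0 (Set.left_mem_Icc.mpr zero_le_one) 0 (by omega))
  have hM1 : 1 ≤ M := by
    rw [hMdef]
    have : 0 ≤ ↑j * B / ρ := div_nonneg (mul_nonneg (Nat.cast_nonneg j) hB0) hρpos.le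
    linarith
  have hCBu : ∀ u ∈ Set.Icc (0:ℝ) 1, ∀ z : ℂ, M ≤ ‖z‖ → E u z ≠ 0 := by
    intro u hu z hz
    exact CB hj (a u) hρpos (hρle u hu) (fun m hm => hB u hu m (by omega)) hz
  have hroots : ∀ u ∈ Set.Icc (0:ℝ) 1, prop u → ∀ r ∈ (pol j (a u)).roots, ψ r < 0 := by
    intro u hu hp r hr
    by_contra hcon
    push_neg at hcon
    have : (pol j (a u)).eval r = 0 := (mem_roots'.mp hr).2
    rw [hEeval] at this
    exact hp r hcon this
  have hkey : ∀ u ∈ Set.Icc (0:ℝ) 1, prop u → ∀ z : ℂ, ∀ c : ℝ, 0 ≤ c → c ≤ ψ z →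
      ρ * c ^ j ≤ ‖E u z‖ := by
    intro u hu hp z c hc hcz
    have hne := pol_ne_zero j (a u) (hlead u hu)
    have h1 := LB hne hc (z := z) (fun r hr => by
      have h2 := hroots u hu hp r hr
      have h3 := hψsub z r
      linarith)
    rw [pol_leadingCoeff j (a u) (hlead u hu), pol_natDegree j (a u) (hlead u hu), hEeval] at h1
    refine le_trans ?_ h1
    exact mul_le_mul_of_nonneg_right (hρle u hu) (pow_nonneg hc j)
  have hopen : ∀ u₂ ∈ Set.Icc (0:ℝ) 1, prop u₂ →
      ∃ ε > 0, ∀ u ∈ Set.Icc (0:ℝ) 1, |u - u₂| < ε → prop u := by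
    intro u₂ hu₂ hp
    have hne := pol_ne_zero j (a u₂) (hlead u₂ hu₂)
    have hcard : Multiset.card (pol j (a u₂)).roots = j := by
      rw [(splits_iff_card_roots).mp (IsAlgClosed.splits _), pol_natDegree j _ (hlead u₂ hu₂)]
    have hrne : (pol j (a u₂)).roots.toFinset.Nonempty := by
      rw [Multiset.toFinset_nonempty]
      intro h
      rw [h] at hcard
      simp at hcard
      omega
    set δ₀ : ℝ := (pol j (a u₂)).roots.toFinset.inf' hrne (fun r => -(ψ r)) with hδ₀def
    have hδ₀pos : 0 < δ₀ := by
      rw [hδ₀def, Finset.lt_inf'_iff]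
      intro r hr
      have := hroots u₂ hu₂ hp r (Multiset.mem_toFinset.mp hr)
      linarith
    have hδ₀le : ∀ r ∈ (pol j (a u₂)).roots, δ₀ ≤ -(ψ r) := by
      intro r hr
      exact Finset.inf'_le _ (Multiset.mem_toFinset.mpr hr)
    set η : ℝ := ρ * δ₀ ^ j / 2 with hηdef
    have hηpos : 0 < η := by positivity
    have hMpos : (0:ℝ) < M := lt_of_lt_of_le one_pos hM1
    have hlow : ∀ z : ℂ, 0 ≤ ψ z → 2 * η ≤ ‖E u₂ z‖ := by
      intro z hz
      have h1 := LB hne hδ₀pos.le (z := z) (fun r hr => by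
        have h2 := hδ₀le r hr
        have h3 := hψsub z r
        linarith)
      rw [pol_leadingCoeff j (a u₂) (hlead u₂ hu₂), pol_natDegree j (a u₂) (hlead u₂ hu₂),
        hEeval] at h1
      have h4 : ρ * δ₀ ^ j ≤ ‖a u₂ j‖ * δ₀ ^ j :=
        mul_le_mul_of_nonneg_right (hρle u₂ hu₂) (pow_nonneg hδ₀pos.le j)
      rw [hηdef]
      linarith
    set D : ℝ → ℝ := fun u => ∑ m ∈ range (j+1), ‖a u m - a u₂ m‖ with hDdef
    have hDcont : Continuous D := by
      refine continuous_finset_sum _ fun m hm => ?_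
      refine Continuous.norm ?_
      exact Continuous.sub (hcont m (by rw [mem_range] at hm; omega)) continuous_const
    have hD0 : D u₂ = 0 := by simp [hDdef]
    have hDnn : ∀ u, 0 ≤ D u := fun u => Finset.sum_nonneg fun m _ => norm_nonneg _
    obtain ⟨ε, hεpos, hε⟩ := Metric.continuousAt_iff.mp hDcont.continuousAt (η / M ^ j)
      (by positivity)
    refine ⟨ε, hεpos, fun u hu hdist => ?_⟩
    have hDu : D u < η / M ^ j := by
      have := hε (show dist u u₂ < ε by rwa [Real.dist_eq])
      rw [Real.dist_eq, hD0, sub_zero, abs_of_nonneg (hDnn u)] at this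
      exact this
    intro z hz hEz
    rcases le_or_gt M ‖z‖ with hzM | hzM
    · exact hCBu u hu z hzM hEz
    have hdiff : ‖E u₂ z - E u z‖ ≤ D u * M ^ j := by
      rw [hEdef]
      have h1 : (∑ m ∈ range (j+1), a u₂ m * z ^ m) - (∑ m ∈ range (j+1), a u m * z ^ m)
          = ∑ m ∈ range (j+1), (a u₂ m - a u m) * z ^ m := by
        rw [← Finset.sum_sub_distrib]
        refine Finset.sum_congr rfl fun m _ => by ring
      rw [h1]
      calc ‖∑ m ∈ range (j+1), (a u₂ m - a u m) * z ^ m‖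
          ≤ ∑ m ∈ range (j+1), ‖(a u₂ m - a u m) * z ^ m‖ := norm_sum_le _ _
        _ ≤ ∑ m ∈ range (j+1), ‖a u m - a u₂ m‖ * M ^ j := by
            refine Finset.sum_le_sum fun m hm => ?_
            rw [mem_range] at hm
            rw [norm_mul, norm_pow, ← norm_sub_rev]
            refine mul_le_mul_of_nonneg_left ?_ (norm_nonneg _)
            calc ‖z‖ ^ m ≤ M ^ m := by
                  refine pow_le_pow_left₀ (norm_nonneg _) hzM.le m
              _ ≤ M ^ j := pow_le_pow_right₀ hM1 (by omega)
        _ = D u * M ^ j := by rw [hDdef, Finset.sum_mul]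
    have h2 : ‖E u₂ z‖ ≤ D u * M ^ j := by
      have : E u₂ z - E u z = E u₂ z := by rw [hEz, sub_zero]
      rwa [this] at hdiff
    have h3 : D u * M ^ j < η := (lt_div_iff₀ (by positivity : (0:ℝ) < M ^ j)).mp hDu
    have := hlow z hz
    linarith
  have hEcont : ∀ z : ℂ, Continuous fun u => E u z := by
    intro z
    refine continuous_finset_sum _ fun m hm => ?_
    exact (hcont m (by rw [mem_range] at hm; omega)).mul continuous_const
  have hprop1 : prop 1 := by
    by_contra hcon
    set Bad : Set ℝ := {u | u ∈ Set.Icc (0:ℝ) 1 ∧ ¬ prop u} with hBadDef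
    have hBadne : Bad.Nonempty := ⟨1, Set.right_mem_Icc.mpr zero_le_one, hcon⟩
    have hBadbdd : BddBelow Bad := ⟨0, fun b hb => hb.1.1⟩
    set u₁ := sInf Bad with hu₁def
    have hu₁0 : 0 ≤ u₁ := le_csInf hBadne (fun b hb => hb.1.1)
    have hu₁1 : u₁ ≤ 1 := csInf_le hBadbdd ⟨Set.right_mem_Icc.mpr zero_le_one, hcon⟩
    have hu₁I : u₁ ∈ Set.Icc (0:ℝ) 1 := ⟨hu₁0, hu₁1⟩
    have hbelow : ∀ v, 0 ≤ v → v < u₁ → prop v := by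
      intro v hv0 hv
      by_contra hbad
      have : u₁ ≤ v := csInf_le hBadbdd ⟨⟨hv0, le_of_lt (lt_of_lt_of_le hv hu₁1)⟩, hbad⟩
      linarith
    have hpropu₁ : prop u₁ := by
      rcases eq_or_lt_of_le hu₁0 with heq | hlt
      · rw [← heq]
        intro z hz
        exact h0 z hz
      · intro z hz hEz
        rcases eq_or_lt_of_le hz with hz0 | hzpos
        · exact hbd u₁ hu₁I z hz0.symm hEz
        · have hκpos : 0 < ρ * (ψ z) ^ j := mul_pos hρpos (pow_pos hzpos j)
          have htend : Filter.Tendsto (fun u => ‖E u z‖) (nhdsWithin u₁ (Set.Iio u₁))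
              (nhds ‖E u₁ z‖) :=
            Filter.Tendsto.mono_left (((hEcont z).norm).tendsto u₁) nhdsWithin_le_nhds
          have hev : ∀ᶠ u in nhdsWithin u₁ (Set.Iio u₁), ρ * (ψ z) ^ j ≤ ‖E u z‖ := by
            filter_upwards [Ioo_mem_nhdsLT_of_mem
              (show u₁ ∈ Set.Ioc (0:ℝ) u₁ from ⟨hlt, le_rfl⟩)] with v hv
            exact hkey v ⟨le_of_lt hv.1, le_trans (le_of_lt hv.2) hu₁1⟩
              (hbelow v (le_of_lt hv.1) hv.2) z (ψ z) hz le_rfl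
          have hlim : ρ * (ψ z) ^ j ≤ ‖E u₁ z‖ := ge_of_tendsto htend hev
          rw [hEz, norm_zero] at hlim
          linarith
    obtain ⟨ε, hεpos, hε⟩ := hopen u₁ hu₁I hpropu₁
    obtain ⟨b, hbBad, hblt⟩ := exists_lt_of_csInf_lt hBadne
      (show sInf Bad < u₁ + ε by rw [← hu₁def]; linarith)
    have hble : u₁ ≤ b := csInf_le hBadbdd hbBad
    have : prop b := hε b hbBad.1 (by rw [abs_of_nonneg (by linarith)]; linarith)
    exact hbBad.2 this
  exact hprop1

/-- transport of the upper-half-plane nonvanishing property along a segment of directions -/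
lemma segIm {n j : ℕ} (hj : 1 ≤ j) (hjn : j ≤ n) (x c₀ c₁ : Fin n → ℝ)
    (hpos : ∀ u ∈ Set.Icc (0:ℝ) 1, 0 < Ssym n j (fun i => (1-u) * c₀ i + u * c₁ i))
    (h0 : ∀ z : ℂ, 0 ≤ z.im → Ssym n j (fun i => (x i : ℂ) + Complex.I + z * (c₀ i : ℂ)) ≠ 0) :
    ∀ z : ℂ, 0 ≤ z.im → Ssym n j (fun i => (x i : ℂ) + Complex.I + z * (c₁ i : ℂ)) ≠ 0 := by
  set v : Fin n → ℂ := fun i => (x i : ℂ) + Complex.I with hvdef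
  set w : ℝ → Fin n → ℂ := fun u i => (((1-u) * c₀ i + u * c₁ i : ℝ) : ℂ) with hwdef
  set a : ℝ → ℕ → ℂ := fun u m => cf n j v (w u) m with hadef
  have hES : ∀ u z, (∑ m ∈ range (j+1), a u m * z ^ m) = Ssym n j (fun i => v i + z * w u i) :=
    fun u z => (S_add_smul n j v (w u) z).symm
  have hψ : ∀ z : ℂ, ((-Complex.I) * z).re = z.im := by intro z; simp
  have hmain := chain hj a
    (fun m _ => cf_continuous n j m (fun i => continuous_const)
      (fun i => by
        have : Continuous fun u : ℝ => (1-u) * c₀ i + u * c₁ i := by continuity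
        exact Complex.continuous_ofReal.comp this))
    (-Complex.I) (by simp)
    (fun u hu => by
      rw [hadef]
      simp only
      rw [cf_top, ← Ssym_ofReal]
      exact_mod_cast (hpos u hu).ne')
    (fun u hu z hz => by
      rw [hES u z]
      rw [hψ z] at hz
      have hzre : z = ((z.re : ℝ) : ℂ) := by
        apply Complex.ext <;> simp [hz]
      have heq : ∀ i, v i + z * w u i
          = ((x i + z.re * ((1-u) * c₀ i + u * c₁ i) : ℝ) : ℂ) + Complex.I := by
        intro i
        rw [hvdef, hwdef]
        conv_lhs => rw [hzre]
        push_cast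
        ring
      rw [Ssym_congr n j heq]
      exact EB n j hjn (fun i => x i + z.re * ((1-u) * c₀ i + u * c₁ i))
        (z := Complex.I) (by simp))
    (fun z hz => by
      rw [hES 0 z]
      rw [hψ z] at hz
      have : ∀ i, v i + z * w 0 i = (x i : ℂ) + Complex.I + z * (c₀ i : ℂ) := by
        intro i
        rw [hvdef, hwdef]
        push_cast
        ring
      rw [Ssym_congr n j this]
      exact h0 z hz)
  intro z hz
  have := hmain z (by rw [hψ z]; exact hz)
  rw [hES 1 z] at this
  have heq : ∀ i, v i + z * w 1 i = (x i : ℂ) + Complex.I + z * (c₁ i : ℂ) := by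
    intro i
    rw [hvdef, hwdef]
    push_cast
    ring
  rw [Ssym_congr n j heq] at this
  exact this

/-- the upper-half-plane nonvanishing in any "nonnegative" direction -/
lemma dirIm {n j : ℕ} (hj : 1 ≤ j) (hjn : j ≤ n) (x b : Fin n → ℝ)
    (hb : ∀ m, m ≤ j → 0 ≤ Ssym n m b) (hbj : 0 < Ssym n j b) :
    ∀ z : ℂ, 0 ≤ z.im → Ssym n j (fun i => (x i : ℂ) + Complex.I + z * (b i : ℂ)) ≠ 0 := by
  have hbase : ∀ z : ℂ, 0 ≤ z.im →
      Ssym n j (fun i => (x i : ℂ) + Complex.I + z * (((1:ℝ) : ℂ))) ≠ 0 := by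
    intro z hz
    have heq : ∀ i, (x i : ℂ) + Complex.I + z * ((1:ℝ):ℂ) = (x i : ℂ) + (Complex.I + z) := by
      intro i; push_cast; ring
    rw [Ssym_congr n j heq]
    refine EB n j hjn x (z := Complex.I + z) ?_
    rw [Complex.add_im, Complex.I_im]
    linarith
  have hsmulnn : ∀ (u : ℝ), 0 ≤ u → u ≤ 1 → ∀ m, m ≤ j → 0 ≤ Ssym n m (fun i => u * b i) := by
    intro u hu0 hu1 m hm
    rw [Ssym_smul]
    exact mul_nonneg (pow_nonneg hu0 m) (hb m hm)
  have h1 : ∀ z : ℂ, 0 ≤ z.im →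
      Ssym n j (fun i => (x i : ℂ) + Complex.I + z * ((1 + b i : ℝ) : ℂ)) ≠ 0 := by
    refine segIm hj hjn x (fun _ => 1) (fun i => 1 + b i) ?_ hbase
    intro u hu
    have heq : ∀ i, (1-u) * (fun _ => (1:ℝ)) i + u * (1 + b i) = u * b i + 1 := by
      intro i; simp; ring
    rw [Ssym_congr n j heq]
    exact Ssym_shift_pos n j _ hjn (hsmulnn u hu.1 hu.2) one_pos
  refine segIm hj hjn x (fun i => 1 + b i) b ?_ h1
  intro u hu
  rcases eq_or_lt_of_le hu.2 with hu1 | hu1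
  · have heq : ∀ i, (1-u) * (1 + b i) + u * b i = b i := by
      intro i; rw [hu1]; ring
    rw [Ssym_congr n j heq]
    exact hbj
  · have heq : ∀ i, (1-u) * (1 + b i) + u * b i = b i + (1-u) := by
      intro i; ring
    rw [Ssym_congr n j heq]
    exact Ssym_shift_pos n j b hjn hb (by linarith)

/-- hyperbolicity of σ_j in nonnegative directions -/
lemma dirReal {n j : ℕ} (hj : 1 ≤ j) (hjn : j ≤ n) (y b : Fin n → ℝ)
    (hb : ∀ m, m ≤ j → 0 ≤ Ssym n m b) (hbj : 0 < Ssym n j b) :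
    ∀ z : ℂ, z.im ≠ 0 → Ssym n j (fun i => (y i : ℂ) + z * (b i : ℂ)) ≠ 0 := by
  have hpos : ∀ z : ℂ, 0 < z.im → Ssym n j (fun i => (y i : ℂ) + z * (b i : ℂ)) ≠ 0 := by
    intro z hzim
    have hκ : ∀ ε : ℝ, 0 < ε →
        Ssym n j b * z.im ^ j ≤
          ‖Ssym n j (fun i => (y i : ℂ) + (ε : ℂ) * Complex.I + z * (b i : ℂ))‖ := by
      intro ε hε
      set vε : Fin n → ℂ := fun i => (y i : ℂ) + (ε:ℂ) * Complex.I with hvdef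
      set aε : ℕ → ℂ := fun m => cf n j vε (fun i => (b i : ℂ)) m with hadef
      have hlead : aε j ≠ 0 := by
        rw [hadef]
        simp only
        rw [cf_top, ← Ssym_ofReal]
        exact_mod_cast hbj.ne'
      have hnv : ∀ w : ℂ, 0 ≤ w.im → (∑ m ∈ range (j+1), aε m * w ^ m) ≠ 0 := by
        intro w hw
        rw [← S_add_smul]
        have hwim : 0 ≤ (w / (ε:ℂ)).im := by
          rw [div_eq_mul_inv, ← Complex.ofReal_inv, Complex.mul_im]
          simp only [Complex.ofReal_re, Complex.ofReal_im, mul_zero, add_zero]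
          positivity
        have hdirS := dirIm hj hjn (fun i => y i / ε) b hb hbj (w / (ε:ℂ)) hwim
        have heq : ∀ i, vε i + w * (b i : ℂ)
            = ((ε:ℝ):ℂ) * (((y i / ε : ℝ):ℂ) + Complex.I + (w / (ε:ℂ)) * (b i : ℂ)) := by
          intro i
          rw [hvdef]
          have hεne : ((ε:ℝ):ℂ) ≠ 0 := by exact_mod_cast hε.ne'
          push_cast
          field_simp
        rw [Ssym_congr n j heq, Ssym_smul]
        exact mul_ne_zero (pow_ne_zero j (by exact_mod_cast hε.ne')) hdirS
      have hpol_ne := pol_ne_zero j aε hlead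
      have hroots : ∀ r ∈ (pol j aε).roots, r.im < 0 := by
        intro r hr
        by_contra hcon
        push_neg at hcon
        have h2 : (pol j aε).eval r = 0 := (mem_roots'.mp hr).2
        rw [pol_eval] at h2
        exact hnv r hcon h2
      have hLB := LB hpol_ne (le_of_lt hzim) (z := z) (fun r hr => by
        have h1 := hroots r hr
        have h2 : |(z - r).im| ≤ ‖z - r‖ := by
          exact Complex.abs_im_le_norm _
        rw [Complex.sub_im] at h2
        have h3 := le_abs_self (z.im - r.im)
        linarith)
      rw [pol_leadingCoeff j aε hlead, pol_natDegree j aε hlead, pol_eval] at hLB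
      have hleadval : ‖aε j‖ = Ssym n j b := by
        rw [hadef]
        simp only
        rw [cf_top, ← Ssym_ofReal, Complex.norm_real]
        exact abs_of_pos hbj
      rw [hleadval] at hLB
      refine le_trans hLB (le_of_eq ?_)
      rw [← S_add_smul]
    have hct : Continuous fun ε : ℝ =>
        ‖Ssym n j (fun i => (y i : ℂ) + (ε:ℂ) * Complex.I + z * (b i : ℂ))‖ := by
      refine Continuous.norm ?_
      refine Ssym_continuousC n j (fun i => ?_)
      continuity
    have hlim : Ssym n j b * z.im ^ j ≤
        ‖Ssym n j (fun i => (y i : ℂ) + ((0:ℝ):ℂ) * Complex.I + z * (b i : ℂ))‖ := by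
      have htend : Filter.Tendsto
          (fun ε : ℝ => ‖Ssym n j (fun i => (y i : ℂ) + (ε:ℂ) * Complex.I + z * (b i : ℂ))‖)
          (nhdsWithin (0:ℝ) (Set.Ioi 0))
          (nhds ‖Ssym n j (fun i => (y i : ℂ) + ((0:ℝ):ℂ) * Complex.I + z * (b i : ℂ))‖) :=
        Filter.Tendsto.mono_left (hct.tendsto 0) nhdsWithin_le_nhds
      refine ge_of_tendsto htend ?_
      refine Filter.eventually_of_mem self_mem_nhdsWithin (fun ε hε => ?_)
      exact hκ ε hε
    have heq0 : ∀ i, (y i : ℂ) + ((0:ℝ):ℂ) * Complex.I + z * (b i : ℂ)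
        = (y i : ℂ) + z * (b i : ℂ) := by
      intro i; push_cast; ring
    rw [Ssym_congr n j heq0] at hlim
    have hκpos : 0 < Ssym n j b * z.im ^ j := mul_pos hbj (pow_pos hzim j)
    intro hS
    rw [hS, norm_zero] at hlim
    linarith
  intro z hz
  rcases hz.lt_or_gt with hneg | hposim
  · have h1 := hpos (starRingEnd ℂ z) (by
      rw [Complex.conj_im]
      linarith)
    intro hS
    apply h1
    have h2 := congrArg (starRingEnd ℂ) hS
    rw [Ssym_conj, map_zero] at h2
    have heq : ∀ i, (starRingEnd ℂ) ((y i : ℂ) + z * (b i : ℂ))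
        = (y i : ℂ) + (starRingEnd ℂ) z * (b i : ℂ) := by
      intro i
      rw [map_add, map_mul, Complex.conj_ofReal, Complex.conj_ofReal]
    rw [Ssym_congr n j heq] at h2
    exact h2
  · exact hpos z hposim

/-- transport of the right-half-plane nonvanishing property along a segment of base points -/
lemma segRe {n j : ℕ} (hj : 1 ≤ j) (hjn : j ≤ n) (mu c₀ c₁ : Fin n → ℝ)
    (hmub : ∀ m, m ≤ j → 0 ≤ Ssym n m mu) (hmuj : 0 < Ssym n j mu)
    (hpos : ∀ u ∈ Set.Icc (0:ℝ) 1, 0 < Ssym n j (fun i => (1-u) * c₀ i + u * c₁ i))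
    (h0 : ∀ z : ℂ, 0 ≤ z.re → Ssym n j (fun i => ((c₀ i : ℝ):ℂ) + z * (mu i : ℂ)) ≠ 0) :
    ∀ z : ℂ, 0 ≤ z.re → Ssym n j (fun i => ((c₁ i : ℝ):ℂ) + z * (mu i : ℂ)) ≠ 0 := by
  set w : Fin n → ℂ := fun i => (mu i : ℂ) with hwdef
  set v : ℝ → Fin n → ℂ := fun u i => (((1-u) * c₀ i + u * c₁ i : ℝ) : ℂ) with hvdef
  set a : ℝ → ℕ → ℂ := fun u m => cf n j (v u) w m with hadef
  have hES : ∀ u z, (∑ m ∈ range (j+1), a u m * z ^ m)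
      = Ssym n j (fun i => v u i + z * w i) := fun u z => (S_add_smul n j (v u) w z).symm
  have hψ : ∀ z : ℂ, ((1:ℂ) * z).re = z.re := by intro z; simp
  have hmain := chain hj a
    (fun m _ => cf_continuous n j m
      (fun i => by
        have : Continuous fun u : ℝ => (1-u) * c₀ i + u * c₁ i := by continuity
        exact Complex.continuous_ofReal.comp this)
      (fun i => continuous_const))
    (1:ℂ) (by simp)
    (fun u hu => by
      rw [hadef]
      simp only
      rw [cf_top, hwdef, ← Ssym_ofReal]
      exact_mod_cast hmuj.ne')
    (fun u hu z hz => by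
      rw [hES u z]
      rw [hψ z] at hz
      rcases eq_or_ne z.im 0 with hzim | hzim
      · have hz0 : z = 0 := by
          apply Complex.ext <;> simp [hz, hzim]
        rw [hz0]
        have heq : ∀ i, v u i + 0 * w i = (((1-u) * c₀ i + u * c₁ i : ℝ) : ℂ) := by
          intro i
          rw [hvdef]
          simp
        rw [Ssym_congr n j heq, ← Ssym_ofReal]
        exact_mod_cast (hpos u hu).ne'
      · exact dirReal hj hjn (fun i => (1-u) * c₀ i + u * c₁ i) mu hmub hmuj z hzim)
    (fun z hz => by
      rw [hES 0 z]
      rw [hψ z] at hz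
      have heq : ∀ i, v 0 i + z * w i = ((c₀ i : ℝ):ℂ) + z * (mu i : ℂ) := by
        intro i
        rw [hvdef, hwdef]
        push_cast
        ring
      rw [Ssym_congr n j heq]
      exact h0 z hz)
  intro z hz
  have hres := hmain z (by rw [hψ]; exact hz)
  rw [hES 1 z] at hres
  have heq : ∀ i, v 1 i + z * w i = ((c₁ i : ℝ):ℂ) + z * (mu i : ℂ) := by
    intro i
    rw [hvdef, hwdef]
    push_cast
    ring
  rw [Ssym_congr n j heq] at hres
  exact hres

/-- the central positivity result: σ_j(λ + μ) > 0 -/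
lemma addPos {n j : ℕ} (hj : 1 ≤ j) (hjn : j ≤ n) (lam mu : Fin n → ℝ)
    (hlamnn : ∀ m, m ≤ j → 0 ≤ Ssym n m lam) (hlamj : 0 < Ssym n j lam)
    (hmunn : ∀ m, m ≤ j → 0 ≤ Ssym n m mu) (hmuj : 0 < Ssym n j mu) :
    0 < Ssym n j (fun i => lam i + mu i) := by
  have hbase : ∀ z : ℂ, 0 ≤ z.re →
      Ssym n j (fun i => ((mu i : ℝ):ℂ) + z * (mu i : ℂ)) ≠ 0 := by
    intro z hz hS
    have heq : ∀ i, ((mu i : ℝ):ℂ) + z * (mu i : ℂ) = (1 + z) * ((mu i : ℝ):ℂ) := by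
      intro i; ring
    rw [Ssym_congr n j heq, Ssym_smul] at hS
    have h1 : ((1:ℂ) + z) ≠ 0 := by
      intro h
      have := congrArg Complex.re h
      simp at this
      linarith
    have h2 : Ssym n j (fun i => ((mu i : ℝ):ℂ)) ≠ 0 := by
      rw [← Ssym_ofReal]
      exact_mod_cast hmuj.ne'
    exact (mul_ne_zero (pow_ne_zero j h1) h2) hS
  have hseg1 := segRe hj hjn mu mu (fun i => mu i + 1) hmunn hmuj
    (fun u hu => by
      rcases eq_or_lt_of_le hu.1 with hu0 | hu0
      · have heq : ∀ i, (1-u) * mu i + u * (mu i + 1) = mu i := by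
          intro i; rw [← hu0]; ring
        rw [Ssym_congr n j heq]; exact hmuj
      · have heq : ∀ i, (1-u) * mu i + u * (mu i + 1) = mu i + u := by
          intro i; ring
        rw [Ssym_congr n j heq]
        exact Ssym_shift_pos n j mu hjn hmunn hu0)
    hbase
  have hseg2 := segRe hj hjn mu (fun i => mu i + 1) (fun _ => 1) hmunn hmuj
    (fun u hu => by
      have heq : ∀ i, (1-u) * (mu i + 1) + u * (fun _ => (1:ℝ)) i = (1-u) * mu i + 1 := by
        intro i; simp; ring
      rw [Ssym_congr n j heq]
      refine Ssym_shift_pos n j _ hjn (fun m hm => ?_) one_pos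
      rw [Ssym_smul]
      exact mul_nonneg (pow_nonneg (by linarith [hu.2] : (0:ℝ) ≤ 1 - u) m) (hmunn m hm))
    hseg1
  have hseg3 := segRe hj hjn mu (fun _ => 1) (fun i => lam i + 1) hmunn hmuj
    (fun u hu => by
      have heq : ∀ i, (1-u) * (fun _ => (1:ℝ)) i + u * (lam i + 1) = u * lam i + 1 := by
        intro i; simp; ring
      rw [Ssym_congr n j heq]
      refine Ssym_shift_pos n j _ hjn (fun m hm => ?_) one_pos
      rw [Ssym_smul]
      exact mul_nonneg (pow_nonneg hu.1 m) (hlamnn m hm))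
    hseg2
  have hseg4 := segRe hj hjn mu (fun i => lam i + 1) lam hmunn hmuj
    (fun u hu => by
      rcases eq_or_lt_of_le hu.2 with hu1 | hu1
      · have heq : ∀ i, (1-u) * (lam i + 1) + u * lam i = lam i := by
          intro i; rw [hu1]; ring
        rw [Ssym_congr n j heq]; exact hlamj
      · have heq : ∀ i, (1-u) * (lam i + 1) + u * lam i = lam i + (1-u) := by
          intro i; ring
        rw [Ssym_congr n j heq]
        exact Ssym_shift_pos n j lam hjn hlamnn (by linarith))
    hseg3
  have hfne : ∀ t : ℝ, 0 ≤ t → Ssym n j (fun i => lam i + t * mu i) ≠ 0 := by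
    intro t ht hf0
    refine hseg4 (t : ℂ) (by simp [ht]) ?_
    have : ((Ssym n j (fun i => lam i + t * mu i) : ℝ) : ℂ)
        = Ssym n j (fun i => ((lam i : ℝ):ℂ) + (t:ℂ) * (mu i : ℂ)) := by
      rw [Ssym_ofReal]
      refine Ssym_congr n j (fun i => ?_)
      push_cast
      ring
    rw [← this, hf0]
    exact Complex.ofReal_zero
  have hcontf : Continuous fun t : ℝ => Ssym n j (fun i => lam i + t * mu i) := by
    unfold Ssym
    refine continuous_finset_sum _ fun s _ => continuous_finset_prod _ fun i _ => ?_
    continuity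
  by_contra hcon
  push_neg at hcon
  have hf1 : Ssym n j (fun i => lam i + 1 * mu i) < 0 := by
    rcases lt_or_eq_of_le hcon with h | h
    · have heq : ∀ i, lam i + mu i = lam i + 1 * mu i := fun i => by ring
      rw [Ssym_congr n j heq] at h
      exact h
    · exfalso
      refine hfne 1 zero_le_one ?_
      have heq : ∀ i, lam i + mu i = lam i + 1 * mu i := fun i => by ring
      rw [Ssym_congr n j heq] at h
      exact h
  have hf0 : 0 < Ssym n j (fun i => lam i + 0 * mu i) := by
    have heq : ∀ i, lam i + 0 * mu i = lam i := fun i => by ring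
    rw [Ssym_congr n j heq]
    exact hlamj
  have hmem : (0:ℝ) ∈ Set.Icc (Ssym n j (fun i => lam i + 1 * mu i))
      (Ssym n j (fun i => lam i + 0 * mu i)) := ⟨hf1.le, hf0.le⟩
  have hIV := intermediate_value_Icc' (zero_le_one) hcontf.continuousOn hmem
  obtain ⟨t, htI, hft⟩ := hIV
  exact hfne t htI.1 hft

end Gard

/-- Γ_k is an open convex cone: open, closed under positive scaling and under addition. -/
theorem gammaK_isOpen_cone_convex (n k : ℕ) (hk1 : 1 ≤ k) (hkn : k ≤ n) :
    IsOpen (GammaK n k) ∧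
    (∀ lam ∈ GammaK n k, ∀ t : ℝ, 0 < t → t • lam ∈ GammaK n k) ∧
    (∀ lam mu : Fin n → ℝ, lam ∈ GammaK n k → mu ∈ GammaK n k →
      lam + mu ∈ GammaK n k) := by
  have hesymm : ∀ (j : ℕ) (lam : Fin n → ℝ), esymm n j lam = Gard.Ssym n j lam :=
    fun _ _ => rfl
  refine ⟨?_, ?_, ?_⟩
  · have hset : GammaK n k = ⋂ j ∈ Finset.Icc 1 k, {lam : Fin n → ℝ | 0 < esymm n j lam} := by
      ext lam
      simp only [GammaK, Set.mem_setOf_eq, Set.mem_iInter, Finset.mem_Icc]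
      exact ⟨fun h j hj => h j hj.1 hj.2, fun h j h1 h2 => h j ⟨h1, h2⟩⟩
    rw [hset]
    refine isOpen_biInter_finset fun j _ => ?_
    have hcont : Continuous fun lam : Fin n → ℝ => esymm n j lam := by
      unfold esymm
      exact continuous_finset_sum _ fun s _ => continuous_finset_prod _ fun i _ =>
        continuous_apply i
    exact isOpen_lt continuous_const hcont
  · intro lam hlam t ht j hj1 hjk
    have heq : esymm n j (t • lam) = t ^ j * esymm n j lam := by
      rw [hesymm, hesymm]
      have h1 : (fun i => t * lam i) = t • lam := rfl
      rw [← h1]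
      exact Gard.Ssym_smul n j lam t
    rw [heq]
    exact mul_pos (pow_pos ht j) (hlam j hj1 hjk)
  · intro lam mu hlam hmu j hj1 hjk
    have hjn : j ≤ n := le_trans hjk hkn
    have hlamnn : ∀ m, m ≤ j → 0 ≤ Gard.Ssym n m lam := by
      intro m hm
      rcases Nat.eq_zero_or_pos m with h0 | h1
      · rw [h0, Gard.Ssym_zero]
        norm_num
      · have := hlam m h1 (le_trans hm hjk)
        rw [hesymm] at this
        exact this.le
    have hmunn : ∀ m, m ≤ j → 0 ≤ Gard.Ssym n m mu := by
      intro m hm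
      rcases Nat.eq_zero_or_pos m with h0 | h1
      · rw [h0, Gard.Ssym_zero]
        norm_num
      · have := hmu m h1 (le_trans hm hjk)
        rw [hesymm] at this
        exact this.le
    have hlamj : 0 < Gard.Ssym n j lam := by
      have := hlam j hj1 hjk
      rwa [hesymm] at this
    have hmuj : 0 < Gard.Ssym n j mu := by
      have := hmu j hj1 hjk
      rwa [hesymm] at this
    have hres := Gard.addPos hj1 hjn lam mu hlamnn hlamj hmunn hmuj
    show 0 < esymm n j (lam + mu)
    rw [hesymm]
    have h1 : (fun i => lam i + mu i) = lam + mu := rfl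
    rw [← h1]
    exact hres
end

section
/- Let λ_1 ≥ λ_2 ≥ ⋯ ≥ λ_n > 0 be positive reals and 1 ≤ k ≤ n. Then σ_{k-1}(λ|1) ≥ (k/n) · σ_k(λ)/λ_1, i.e., the smallest of the derivatives σ_k^{ii} = σ_{k-1}(λ|i) (which is σ_{k-1}(λ|1) under this ordering) is bounded below by (k/n)·σ_k(λ)/λ_1. -/
open Finset

lemma key_split {n : ℕ} (f : Fin n → ℝ) (A : Finset (Fin n)) (a : Fin n) (ha : a ∈ A) (m : ℕ) :
    ∑ s ∈ A.powersetCard (m+1), ∏ i ∈ s, f i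
      = (∑ s ∈ (A.erase a).powersetCard (m+1), ∏ i ∈ s, f i)
        + f a * ∑ s ∈ (A.erase a).powersetCard m, ∏ i ∈ s, f i := by
  have hna : a ∉ A.erase a := Finset.notMem_erase a A
  conv_lhs => rw [← Finset.insert_erase ha]
  rw [Finset.powersetCard_succ_insert hna, Finset.sum_union]
  · congr 1
    rw [Finset.sum_image, Finset.mul_sum]
    · refine Finset.sum_congr rfl fun s hs => ?_
      rw [Finset.mem_powersetCard] at hs
      rw [Finset.prod_insert (fun h => hna (hs.1 h)), mul_comm]
    · intro s hs t ht hst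
      rw [Finset.mem_coe, Finset.mem_powersetCard] at hs ht
      have has : a ∉ s := fun h => hna (hs.1 h)
      have hat : a ∉ t := fun h => hna (ht.1 h)
      have := congrArg (fun u => Finset.erase u a) hst
      simpa [Finset.erase_insert has, Finset.erase_insert hat] using this
  · rw [Finset.disjoint_left]
    intro s hs hs'
    rw [Finset.mem_powersetCard] at hs
    have has : a ∉ s := fun h => hna (hs.1 h)
    rcases Finset.mem_image.mp hs' with ⟨t, _, rfl⟩
    exact has (Finset.mem_insert_self a t)

lemma sum_del {n : ℕ} (f : Fin n → ℝ) (k : ℕ) (hkn : k ≤ n) :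
    ∑ p : Fin n, ∑ s ∈ ((univ : Finset (Fin n)).erase p).powersetCard k, ∏ i ∈ s, f i
      = ((n : ℝ) - k) * ∑ s ∈ (univ : Finset (Fin n)).powersetCard k, ∏ i ∈ s, f i := by
  have h1 : ∀ p : Fin n, ((univ : Finset (Fin n)).erase p).powersetCard k
      = ((univ : Finset (Fin n)).powersetCard k).filter (fun s => p ∉ s) := by
    intro p
    ext s
    simp [Finset.mem_powersetCard, Finset.subset_erase, and_assoc, and_comm]
  calc ∑ p : Fin n, ∑ s ∈ ((univ : Finset (Fin n)).erase p).powersetCard k, ∏ i ∈ s, f i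
      = ∑ p : Fin n, ∑ s ∈ (univ : Finset (Fin n)).powersetCard k,
          if p ∉ s then ∏ i ∈ s, f i else 0 := by
        refine Finset.sum_congr rfl fun p _ => ?_
        rw [h1 p, Finset.sum_filter]
    _ = ∑ s ∈ (univ : Finset (Fin n)).powersetCard k, ∑ p : Fin n,
          if p ∉ s then ∏ i ∈ s, f i else 0 := Finset.sum_comm
    _ = ((n : ℝ) - k) * ∑ s ∈ (univ : Finset (Fin n)).powersetCard k, ∏ i ∈ s, f i := by
        rw [Finset.mul_sum]
        refine Finset.sum_congr rfl fun s hs => ?_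
        rw [Finset.mem_powersetCard] at hs
        rw [Finset.sum_ite, Finset.sum_const, Finset.sum_const, smul_zero, add_zero,
          nsmul_eq_mul]
        congr 1
        have : Finset.filter (fun x => x ∉ s) univ = sᶜ := by
          ext x; simp
        rw [this, Finset.card_compl, hs.2, Fintype.card_fin, Nat.cast_sub hkn]

lemma sum_prod_nonneg {n : ℕ} (lam : Fin n → ℝ) (hpos : ∀ i, 0 < lam i)
    (F : Finset (Finset (Fin n))) : 0 ≤ ∑ s ∈ F, ∏ i ∈ s, lam i :=
  Finset.sum_nonneg fun s _ => Finset.prod_nonneg fun i _ => (hpos i).le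

/-- If λ_1 ≥ ⋯ ≥ λ_n > 0 then σ_{k-1}(λ|1) ≥ (k/n)·σ_k(λ)/λ_1. -/
theorem esymmDel_largest_lower_bound (n k : ℕ) (hn : 0 < n) (hk1 : 1 ≤ k) (hkn : k ≤ n)
    (lam : Fin n → ℝ) (hpos : ∀ i, 0 < lam i)
    (hdec : ∀ i j : Fin n, i ≤ j → lam j ≤ lam i) :
    esymmDel n (k - 1) lam ⟨0, hn⟩ ≥ (k : ℝ) / n * (esymm n k lam / lam ⟨0, hn⟩) := by
  obtain ⟨m, rfl⟩ : ∃ m, k = m + 1 := ⟨k - 1, (Nat.succ_pred_eq_of_pos hk1).symm⟩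
  set p0 : Fin n := ⟨0, hn⟩ with hp0
  -- decomposition identity
  have hkey : ∀ p : Fin n,
      esymm n (m+1) lam = esymmDel n (m+1) lam p + lam p * esymmDel n m lam p := by
    intro p
    exact key_split lam univ p (Finset.mem_univ p) m
  -- monotonicity: removing the largest entry gives the smallest deleted esymm
  have hmono : ∀ p : Fin n, esymmDel n (m+1) lam p0 ≤ esymmDel n (m+1) lam p := by
    intro p
    rcases eq_or_ne p p0 with rfl | hne
    · exact le_refl _
    · have hp0mem : p ∈ (univ : Finset (Fin n)).erase p0 :=
        Finset.mem_erase.mpr ⟨hne, Finset.mem_univ p⟩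
      have hpmem : p0 ∈ (univ : Finset (Fin n)).erase p :=
        Finset.mem_erase.mpr ⟨(Ne.symm hne), Finset.mem_univ p0⟩
      have h1 := key_split lam ((univ : Finset (Fin n)).erase p0) p hp0mem m
      have h2 := key_split lam ((univ : Finset (Fin n)).erase p) p0 hpmem m
      have hcomm : ((univ : Finset (Fin n)).erase p0).erase p
          = ((univ : Finset (Fin n)).erase p).erase p0 := Finset.erase_right_comm
      rw [hcomm] at h1
      have hle : lam p ≤ lam p0 := hdec p0 p (by exact Fin.mk_le_of_le_val (Nat.zero_le _))
      have hnn : 0 ≤ ∑ s ∈ (((univ : Finset (Fin n)).erase p).erase p0).powersetCard m,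
          ∏ i ∈ s, lam i := sum_prod_nonneg lam hpos _
      show esymmDel n (m+1) lam p0 ≤ esymmDel n (m+1) lam p
      unfold esymmDel
      rw [h1, h2]
      nlinarith [hnn, hle]
  -- each term bounded
  have hterm : ∀ p : Fin n, lam p * esymmDel n m lam p ≤ lam p0 * esymmDel n m lam p0 := by
    intro p
    have e1 := hkey p
    have e2 := hkey p0
    have := hmono p
    linarith
  -- sum identity: ∑_p lam p * Del_m p = (m+1) * esymm
  have hsum : ∑ p : Fin n, lam p * esymmDel n m lam p = ((m:ℝ)+1) * esymm n (m+1) lam := by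
    have : ∑ p : Fin n, (esymm n (m+1) lam - esymmDel n (m+1) lam p)
        = ((m:ℝ)+1) * esymm n (m+1) lam := by
      rw [Finset.sum_sub_distrib, Finset.sum_const, Finset.card_univ, Fintype.card_fin,
        nsmul_eq_mul]
      have := sum_del lam (m+1) hkn
      unfold esymmDel esymm
      rw [this]
      push_cast
      have hc : ((m:ℝ)+1) ≤ (n:ℝ) := by exact_mod_cast hkn
      ring
    rw [← this]
    refine Finset.sum_congr rfl fun p _ => ?_
    have := hkey p
    linarith
  have hbound : ((m:ℝ)+1) * esymm n (m+1) lam ≤ n * (lam p0 * esymmDel n m lam p0) := by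
    rw [← hsum]
    calc ∑ p : Fin n, lam p * esymmDel n m lam p
        ≤ ∑ _p : Fin n, lam p0 * esymmDel n m lam p0 :=
          Finset.sum_le_sum fun p _ => hterm p
      _ = n * (lam p0 * esymmDel n m lam p0) := by
          rw [Finset.sum_const, Finset.card_univ, Fintype.card_fin, nsmul_eq_mul]
  have hlam : 0 < lam p0 := hpos p0
  have hnR : (0:ℝ) < n := by exact_mod_cast hn
  rw [ge_iff_le, div_mul_div_comm, div_le_iff₀ (by positivity)]
  have hk : ((m+1 : ℕ) : ℝ) = (m:ℝ) + 1 := by push_cast; ring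
  have hk2 : ((m+1 : ℕ) - 1 : ℕ) = m := rfl
  rw [hk2, hk]
  nlinarith [hbound]
end
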